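/- A consequence relation ⊢ on a set L is monotonic, reflexive and transitive if and only if it has a sound and complete intersective pure semantics, i.e. a sound and complete intersective mixed semantics with D_p^λ = D_c^λ for every λ. -/

import Mathlib

universe u v w x

/-- Mixed truth-relation. -/
def Mixed {V : Type*} (Dp Dc : Set V) (γ δ : Set V) : Prop :=
  γ ⊆ Dp → (δ ∩ Dc).Nonempty

def Monotonic {L : Type*} (Cons : Set L → Set L → Prop) : Prop :=
  ∀ ⦃Γ₁ Γ₂ Δ₁ Δ₂ : Set L⦄, Γ₁ ⊆ Γ₂ → Δ₁ ⊆ Δ₂ → Cons Γ₁ Δ₁ → Cons Γ₂ Δ₂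

def ReflRel {L : Type*} (Cons : Set L → Set L → Prop) : Prop :=
  ∀ F : L, Cons {F} {F}

def TransRel {L : Type*} (Cons : Set L → Set L → Prop) : Prop :=
  ∀ Γ Δ : Set L, ¬ Cons Γ Δ →
    ∃ Γ' Δ' : Set L, Γ ⊆ Γ' ∧ Δ ⊆ Δ' ∧ ¬ Cons Γ' Δ' ∧ Γ' ∪ Δ' = Set.univ

def LRPermeable {L : Type*} (Cons : Set L → Set L → Prop) : Prop :=
  ∀ Γ Δ S : Set L, Cons (Γ ∪ S) Δ → Cons Γ (S ∪ Δ)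

def RLPermeable {L : Type*} (Cons : Set L → Set L → Prop) : Prop :=
  ∀ Γ Δ S : Set L, Cons Γ (S ∪ Δ) → Cons (Γ ∪ S) Δ

def Permeable {L : Type*} (Cons : Set L → Set L → Prop) : Prop :=
  LRPermeable Cons ∨ RLPermeable Cons

def CompactRel {L : Type*} (Cons : Set L → Set L → Prop) : Prop :=
  ∀ Γ Δ : Set L, Cons Γ Δ →
    ∃ Γ' Δ' : Set L, Γ' ⊆ Γ ∧ Δ' ⊆ Δ ∧ Γ'.Finite ∧ Δ'.Finite ∧ Cons Γ' Δ'

/-- Sound and complete intersective mixed semantics. -/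
def IsIMS {L V W Λ : Type*} (Cons : Set L → Set L → Prop)
    (interp : L → W → V) (Dp Dc : Λ → Set V) : Prop :=
  ∀ Γ Δ : Set L, Cons Γ Δ ↔
    ∀ (w : W) (l : Λ), Mixed (Dp l) (Dc l)
      ((fun F => interp F w) '' Γ) ((fun F => interp F w) '' Δ)

/-- Sound and complete mixed semantics (single pair). -/
def IsMixedSem {L V W : Type*} (Cons : Set L → Set L → Prop)
    (interp : L → W → V) (Dp Dc : Set V) : Prop :=
  ∀ Γ Δ : Set L, Cons Γ Δ ↔
    ∀ w : W, Mixed Dp Dc ((fun F => interp F w) '' Γ) ((fun F => interp F w) '' Δ)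

/-- Formulae of a sentential language. -/
inductive Formula (A : Type u) (C : Type u) (ar : C → ℕ) : Type u
  | atom : A → Formula A C ar
  | conn : (c : C) → (Fin (ar c) → Formula A C ar) → Formula A C ar

/-- Substitution induced by a map from atoms to formulae. -/
def Formula.subst {A C : Type u} {ar : C → ℕ} (σ : A → Formula A C ar) :
    Formula A C ar → Formula A C ar
  | .atom a => σ a
  | .conn c Fs => .conn c (fun i => (Fs i).subst σ)

def SubstInvariant {A C : Type u} {ar : C → ℕ}
    (Cons : Set (Formula A C ar) → Set (Formula A C ar) → Prop) : Prop :=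
  ∀ (σ : A → Formula A C ar) (Γ Δ : Set (Formula A C ar)),
    Cons Γ Δ → Cons (Formula.subst σ '' Γ) (Formula.subst σ '' Δ)

/-- Evaluation of formulae from truth-functions and a valuation. -/
def evalF {A C : Type u} {ar : C → ℕ} {V : Type v}
    (tf : (c : C) → (Fin (ar c) → V) → V) (v : A → V) : Formula A C ar → V
  | .atom a => v a
  | .conn c Fs => tf c (fun i => evalF tf v (Fs i))

/-- Truth-functionality of an interpretation w.r.t. truth-functions. -/
def Compositional {A C : Type u} {ar : C → ℕ} {V : Type v} {W : Type w}
    (interp : Formula A C ar → W → V)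
    (tf : (c : C) → (Fin (ar c) → V) → V) : Prop :=
  ∀ (c : C) (Fs : Fin (ar c) → Formula A C ar) (w : W),
    interp (Formula.conn c Fs) w = tf c (fun i => interp (Fs i) w)

/-- Regular connectives. -/
def RegularRel {A C : Type u} {ar : C → ℕ}
    (Cons : Set (Formula A C ar) → Set (Formula A C ar) → Prop) : Prop :=
  ∀ c : C, ∃ Bp Bc : Set (Set (Fin (ar c)) × Set (Fin (ar c))),
    ∀ (Γ Δ : Set (Formula A C ar)) (Fs : Fin (ar c) → Formula A C ar),
      (Cons (Γ ∪ {Formula.conn c Fs}) Δ ↔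
        ∀ B ∈ Bp, Cons (Γ ∪ Fs '' B.1) (Fs '' B.2 ∪ Δ)) ∧
      (Cons Γ ({Formula.conn c Fs} ∪ Δ) ↔
        ∀ B ∈ Bc, Cons (Γ ∪ Fs '' B.1) (Fs '' B.2 ∪ Δ))

/-! A world and a pair that refute `Γ ⊢ Δ` split `L` into the formulae designated there and the
rest, which is again refuted; this gives transitivity. Conversely, transitivity supplies enough
refuted bipartitions `Γ' ∪ Δ' = L` to serve as the worlds of a two-valued canonical semantics, in
which a formula is designated iff it lies on the left. -/

open Set

theorem mixed_image_iff {L V : Type*} (f : L → V) (Dp Dc : Set V) (Γ Δ : Set L) :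
    Mixed Dp Dc (f '' Γ) (f '' Δ) ↔ (Γ ⊆ f ⁻¹' Dp → (Δ ∩ f ⁻¹' Dc).Nonempty) := by
  rw [Mixed, image_subset_iff, image_inter_nonempty_iff]

theorem Mixed.mono {V : Type*} {Dp Dc γ₁ γ₂ δ₁ δ₂ : Set V} (hγ : γ₁ ⊆ γ₂) (hδ : δ₁ ⊆ δ₂)
    (h : Mixed Dp Dc γ₁ δ₁) : Mixed Dp Dc γ₂ δ₂ :=
  fun hγ₂ => (h (hγ.trans hγ₂)).mono (inter_subset_inter_left _ hδ)

namespace IsIMS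

variable {L V W Λ : Type*} {Cons : Set L → Set L → Prop} {interp : L → W → V} {Dp Dc : Λ → Set V}

theorem monotonic (hsem : IsIMS Cons interp Dp Dc) : Monotonic Cons := by
  intro Γ₁ Γ₂ Δ₁ Δ₂ hΓ hΔ h
  exact (hsem Γ₂ Δ₂).2 fun w l => ((hsem Γ₁ Δ₁).1 h w l).mono (image_mono hΓ) (image_mono hΔ)

theorem reflRel (hsem : IsIMS Cons interp Dp Dc) (hpc : ∀ l, Dp l ⊆ Dc l) : ReflRel Cons := by
  intro F
  refine (hsem {F} {F}).2 fun w l => ?_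
  rw [mixed_image_iff, singleton_subset_iff, singleton_inter_nonempty]
  exact (hpc l ·)

theorem transRel (hsem : IsIMS Cons interp Dp Dc) (hcp : ∀ l, Dc l ⊆ Dp l) : TransRel Cons := by
  intro Γ Δ hΓΔ
  obtain ⟨w, l, hfail⟩ : ∃ w l, ¬ Mixed (Dp l) (Dc l)
      ((fun F => interp F w) '' Γ) ((fun F => interp F w) '' Δ) := by
    simpa [hsem Γ Δ] using hΓΔ
  obtain ⟨hΓ, hΔ⟩ := (mixed_image_iff .. |>.not.trans Classical.not_imp).1 hfail
  refine ⟨{F | interp F w ∈ Dp l}, {F | interp F w ∉ Dc l}, hΓ, fun G hG hDc => hΔ ⟨G, hG, hDc⟩,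
    fun h => ?_, eq_univ_of_forall fun F => (em _).imp_right (mt (hcp l ·))⟩
  obtain ⟨G, hG, hDc⟩ := (mixed_image_iff ..).1 ((hsem _ _).1 h w l) subset_rfl
  exact hG hDc

end IsIMS

def RefutedBipartition {L : Type*} (Cons : Set L → Set L → Prop) : Type _ :=
  {p : Set L × Set L // ¬ Cons p.1 p.2 ∧ p.1 ∪ p.2 = univ}

section Canonical

variable {L : Type*} {Cons : Set L → Set L → Prop}

theorem cons_iff_forall_refutedBipartition (hM : Monotonic Cons) (hR : ReflRel Cons)
    (hT : TransRel Cons) (Γ Δ : Set L) :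
    Cons Γ Δ ↔ ∀ w : RefutedBipartition Cons, Γ ⊆ w.1.1 → (Δ ∩ w.1.1).Nonempty := by
  constructor
  · intro h ⟨⟨Γ', Δ'⟩, hΓΔ', hcover⟩ hΓ
    by_contra hΔ
    refine hΓΔ' (hM hΓ (fun G hG => ?_) h)
    exact (hcover.symm ▸ mem_univ G : G ∈ Γ' ∪ Δ').resolve_left fun hG' => hΔ ⟨G, hG, hG'⟩
  · intro hall
    by_contra h
    obtain ⟨Γ', Δ', hΓ, hΔ, hΓΔ', hcover⟩ := hT Γ Δ h
    obtain ⟨G, hGΔ, hGΓ'⟩ := hall ⟨(Γ', Δ'), hΓΔ', hcover⟩ hΓ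
    exact hΓΔ' (hM (singleton_subset_iff.2 hGΓ') (singleton_subset_iff.2 (hΔ hGΔ)) (hR G))

theorem isIMS_canonical (hM : Monotonic Cons) (hR : ReflRel Cons) (hT : TransRel Cons) :
    IsIMS Cons (fun F (w : RefutedBipartition Cons) => ULift.up.{u} (F ∈ w.1.1))
      (fun _ : PUnit => {v | v.down}) (fun _ => {v | v.down}) := by
  intro Γ Δ
  simp only [mixed_image_iff, cons_iff_forall_refutedBipartition hM hR hT, forall_const]
  rfl

end Canonical

/-- monotonicity + reflexivity + transitivity is equivalent to the
existence of a sound and complete intersective pure semantics. -/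
theorem statement_9 {L : Type u} (Cons : Set L → Set L → Prop) :
    (Monotonic Cons ∧ ReflRel Cons ∧ TransRel Cons) ↔
      ∃ (V W Λ : Type u) (interp : L → W → V) (Dp Dc : Λ → Set V),
        (∀ l : Λ, Dp l = Dc l) ∧ IsIMS Cons interp Dp Dc := by
  constructor
  · rintro ⟨hM, hR, hT⟩
    exact ⟨_, _, _, _, _, _, fun _ => rfl, isIMS_canonical hM hR hT⟩
  · rintro ⟨V, W, Λ, interp, Dp, Dc, hpure, hsem⟩
    exact ⟨hsem.monotonic, hsem.reflRel fun l => (hpure l).le, hsem.transRel fun l => (hpure l).ge⟩
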